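/- arXiv:1807.08367 — 2 statements merged into one kernel-verified Lean document; each statement's English description precedes it below -/
import Mathlib

section
/- For any integer n ≥ 1 and any real e with e/(4n) > arccosh(√2), we have ∑_{j=2}^{2n} cosh²((n+1−j)·e/(4n)) < cosh²(e/4). -/
noncomputable def arccosh (x : ℝ) : ℝ := Real.log (x + Real.sqrt (x ^ 2 - 1))

/-! With `x = e / (4n)` the indices `n + 1 - j` run over `-(n-1), …, n-1`, so by evenness the sum
is `2 ∑_{k<n} cosh² (k x) - 1`. Once `cosh² x ≥ 2`, the addition formula gives
`cosh² ((k+1) x) ≥ 3 cosh² (k x)` for `k ≥ 1`, and this growth makes `cosh² (n x)` dominate twice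
the sum of all earlier terms. -/

open Finset Real

theorem cosh_arccosh {y : ℝ} (hy : 1 ≤ y) : cosh (arccosh y) = y := by
  have hr : √(y ^ 2 - 1) ^ 2 = y ^ 2 - 1 := sq_sqrt (by nlinarith)
  have hpos : 0 < y + √(y ^ 2 - 1) := by positivity
  have hinv : (y + √(y ^ 2 - 1))⁻¹ = y - √(y ^ 2 - 1) :=
    inv_eq_of_mul_eq_one_right (by nlinarith)
  rw [arccosh, cosh_eq, exp_neg, exp_log hpos, hinv]
  ring

theorem arccosh_nonneg {y : ℝ} (hy : 1 ≤ y) : 0 ≤ arccosh y :=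
  log_nonneg (by linarith [sqrt_nonneg (y ^ 2 - 1)])

theorem lt_cosh_of_arccosh_lt {x y : ℝ} (hy : 1 ≤ y) (h : arccosh y < x) : y < cosh x := by
  have hnonneg := arccosh_nonneg hy
  rw [← cosh_arccosh hy, cosh_lt_cosh, abs_of_nonneg hnonneg, abs_of_pos (hnonneg.trans_lt h)]
  exact h

theorem three_mul_cosh_sq_le_cosh_add_sq {x y : ℝ} (hx : 0 ≤ x) (hxy : x ≤ y)
    (hc : 2 ≤ cosh x ^ 2) : 3 * cosh y ^ 2 ≤ cosh (y + x) ^ 2 := by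
  have hs : 0 ≤ sinh x := sinh_nonneg_iff.mpr hx
  have hS : sinh x ≤ sinh y := sinh_le_sinh.mpr hxy
  have hs1 : 1 ≤ sinh x ^ 2 := by nlinarith [cosh_sq x]
  have hSs : 1 ≤ sinh y * sinh x := by nlinarith
  have hCc : 1 ≤ cosh y * cosh x := one_le_mul_of_one_le_of_one_le (one_le_cosh y) (one_le_cosh x)
  rw [cosh_add]
  nlinarith [cosh_sq y, cosh_sq x, mul_le_mul hCc hSs zero_le_one (by linarith)]

theorem two_mul_sum_range_le {a : ℕ → ℝ} (h0 : 0 ≤ a 0) (h1 : 2 * a 0 ≤ a 1)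
    (hstep : ∀ k, 1 ≤ k → 3 * a k ≤ a (k + 1)) (n : ℕ) :
    2 * ∑ k ∈ range n, a k ≤ a n := by
  induction n with
  | zero => simpa using h0
  | succ n ih =>
    rw [sum_range_succ]
    rcases n.eq_zero_or_pos with rfl | hn
    · simpa using h1
    · linarith [hstep n hn]

theorem sum_range_sub_of_even {f : ℝ → ℝ} (hf : Function.Even f) (m : ℕ) :
    ∑ i ∈ range (2 * m + 1), f ((m : ℝ) - i) = 2 * ∑ k ∈ range (m + 1), f k - f 0 := by
  induction m with
  | zero => simp [two_mul]
  | succ m ih =>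
    rw [show 2 * (m + 1) + 1 = 2 * m + 1 + 1 + 1 by ring, sum_range_succ, sum_range_succ',
      sum_range_succ _ (m + 1)]
    have hshift : ∀ i : ℕ, f (((m + 1 : ℕ) : ℝ) - ((i + 1 : ℕ) : ℝ)) = f ((m : ℝ) - i) := by
      intro i; push_cast; ring_nf
    have hleft : f (((m + 1 : ℕ) : ℝ) - ((2 * m + 1 + 1 : ℕ) : ℝ)) = f ((m + 1 : ℕ) : ℝ) := by
      rw [← hf]; push_cast; ring_nf
    rw [hleft]
    simp only [hshift, ih, Nat.cast_zero, sub_zero]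
    push_cast
    ring

theorem sum_Icc_sub_of_even {f : ℝ → ℝ} (hf : Function.Even f) {n : ℕ} (hn : 1 ≤ n) :
    ∑ j ∈ Icc 2 (2 * n), f ((n : ℝ) + 1 - j) = 2 * ∑ k ∈ range n, f k - f 0 := by
  obtain ⟨m, rfl⟩ := Nat.exists_eq_add_of_le' hn
  rw [← sum_range_sub_of_even hf, ← Ico_add_one_right_eq_Icc, sum_Ico_eq_sum_range,
    show 2 * (m + 1) + 1 - 2 = 2 * m + 1 by omega]
  refine sum_congr rfl fun i _ => ?_
  push_cast
  ring_nf

theorem sum_cosh_sq_lt_cosh_sq (n : ℕ) (hn : 1 ≤ n) (e : ℝ)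
    (he : e / (4 * n) > arccosh (Real.sqrt 2)) :
    ∑ j ∈ Finset.Icc 2 (2 * n), Real.cosh (((n : ℝ) + 1 - j) * e / (4 * n)) ^ 2 <
      Real.cosh (e / 4) ^ 2 := by
  set x := e / (4 * n) with hx
  have one_le_sqrt_two : (1 : ℝ) ≤ √2 := one_le_sqrt.mpr one_le_two
  have hx0 : 0 ≤ x := (arccosh_nonneg one_le_sqrt_two).trans he.le
  have hc : 2 ≤ cosh x ^ 2 :=
    ((sqrt_lt' (by positivity)).mp (lt_cosh_of_arccosh_lt one_le_sqrt_two he)).le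
  have hgrowth : 2 * ∑ k ∈ range n, cosh (k * x) ^ 2 ≤ cosh (n * x) ^ 2 := by
    refine two_mul_sum_range_le (a := fun k : ℕ => cosh (k * x) ^ 2) (by positivity)
      (by simpa using hc) (fun k hk => ?_) n
    rw [Nat.cast_succ, add_one_mul]
    exact three_mul_cosh_sq_le_cosh_add_sq hx0
      (le_mul_of_one_le_left hx0 (by exact_mod_cast hk)) hc
  have heven : Function.Even fun t : ℝ => cosh (t * x) ^ 2 := fun t => by
    simp only [neg_mul, cosh_neg]
  have hquarter : e / 4 = n * x := by
    rw [hx]; field_simp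
  simp only [mul_div_assoc, ← hx]
  rw [sum_Icc_sub_of_even heven hn, hquarter]
  simp only [zero_mul, cosh_zero]
  linarith
end

section
/- Let t_n be the unique positive solution of cosh(t) = tanh(e(t)/4)·sinh(e(t)/4) where e(t) = 4n·arcsinh(coth t). Then t_n = n·log(1+√2) + o(1) as n → ∞. -/
/-!
Write `E = e(t)/4 = n·arsinh(coth t) ≥ n·arsinh 1`. Since
`tanh E · sinh E = cosh E - 1/cosh E`, the equation says that `cosh t` falls short of `cosh E`
by `1/cosh E ≤ cosh E / 2`; hence `t ≤ E ≤ t + log 4`, so `t → ∞`, and by convexity of `cosh`,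
`sinh t · (E - t) ≤ 1/cosh E ≤ 1`, so `E - t ≤ 1/t`. On the other side `arsinh` is 1-Lipschitz,
so `E - n·arsinh 1 ≤ n (coth t - 1) = O(n e^{-2t}) = O(n e^{-2n·arsinh 1})`. Both error terms
vanish, and `arsinh 1 = log (1 + √2)`.
-/

open Real Filter Topology

namespace Real

theorem arsinh_one : arsinh 1 = log (1 + √2) := by
  norm_num [arsinh]

theorem cosh_arsinh_one : cosh (arsinh 1) = √2 := by
  norm_num [cosh_arsinh]

theorem tanh_mul_sinh (x : ℝ) : tanh x * sinh x = cosh x - (cosh x)⁻¹ := by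
  have hcosh := (cosh_pos x).ne'
  rw [tanh_eq_sinh_div_cosh]
  field_simp
  linear_combination (cosh_sq x).symm

theorem cosh_add_sinh_mul_sub_le_cosh (x y : ℝ) : cosh x + sinh x * (y - x) ≤ cosh y := by
  have hy : exp y = exp x * exp (y - x) := by rw [← exp_add]; ring_nf
  have hy' : exp (-y) = exp (-x) * exp (x - y) := by rw [← exp_add]; ring_nf
  rw [cosh_eq, cosh_eq, sinh_eq, hy, hy']
  nlinarith [mul_le_mul_of_nonneg_left (add_one_le_exp (y - x)) (exp_pos x).le,
    mul_le_mul_of_nonneg_left (add_one_le_exp (x - y)) (exp_pos (-x)).le]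

theorem one_le_cosh_div_sinh {x : ℝ} (hx : 0 < x) : 1 ≤ cosh x / sinh x :=
  (one_le_div (sinh_pos_iff.2 hx)).2 (sinh_lt_cosh x).le

theorem arsinh_sub_arsinh_le {x y : ℝ} (h : x ≤ y) : arsinh y - arsinh x ≤ y - x := by
  have hmono := sinh_sub_id_strictMono.monotone
    (show arsinh x ≤ arsinh x + (y - x) by linarith)
  simp only [sinh_arsinh] at hmono
  have : arsinh y ≤ arsinh (sinh (arsinh x + (y - x))) := arsinh_le_arsinh.2 (by linarith)
  rw [arsinh_sinh] at this
  linarith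

theorem cosh_div_sinh_sub_one_le {x : ℝ} (hx : 1 / 2 ≤ x) :
    cosh x / sinh x - 1 ≤ 4 * exp (-(2 * x)) := by
  have hexp : exp (-x) * exp x = 1 := by rw [← exp_add]; simp
  have hsq : 2 ≤ exp x * exp x := by
    rw [← exp_add]; linarith [add_one_le_exp (x + x)]
  have hsinh : exp x / 4 ≤ sinh x := by
    rw [sinh_eq]; nlinarith [exp_pos x, exp_pos (-x)]
  have hs : 0 < sinh x := (by positivity : (0:ℝ) < exp x / 4).trans_le hsinh
  rw [div_sub_one hs.ne', cosh_sub_sinh, div_le_iff₀ hs,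
    show -(2 * x) = -x + -x by ring, exp_add]
  nlinarith [exp_pos (-x), exp_pos x]

end Real

/-- `e(t) / 4` in the notation of the paper. -/
noncomputable def quarterE (n : ℕ) (T : ℝ) : ℝ := n * arsinh (cosh T / sinh T)

def IsSolution (n : ℕ) (T : ℝ) : Prop :=
  0 < T ∧ cosh T = tanh (quarterE n T) * sinh (quarterE n T)

section

variable {n : ℕ} {T : ℝ}

theorem natCast_mul_arsinh_one_le_quarterE (hT : 0 < T) : n * arsinh 1 ≤ quarterE n T :=
  mul_le_mul_of_nonneg_left (arsinh_le_arsinh.2 (one_le_cosh_div_sinh hT)) n.cast_nonneg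

theorem quarterE_sub_le (hT : 0 < T) :
    quarterE n T - n * arsinh 1 ≤ n * (cosh T / sinh T - 1) := by
  rw [quarterE, ← mul_sub]
  exact mul_le_mul_of_nonneg_left (arsinh_sub_arsinh_le (one_le_cosh_div_sinh hT)) n.cast_nonneg

theorem quarterE_nonneg (hT : 0 < T) : 0 ≤ quarterE n T :=
  mul_nonneg n.cast_nonneg (arsinh_nonneg_iff.2 (zero_le_one.trans (one_le_cosh_div_sinh hT)))

end

namespace IsSolution

variable {n : ℕ} {T : ℝ}

theorem cosh_eq (h : IsSolution n T) :
    cosh T = cosh (quarterE n T) - (cosh (quarterE n T))⁻¹ := by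
  rw [h.2, tanh_mul_sinh]

theorem le_quarterE (h : IsSolution n T) : T ≤ quarterE n T := by
  have hE : cosh T ≤ cosh (quarterE n T) := by
    rw [h.cosh_eq]; linarith [inv_pos.2 (cosh_pos (quarterE n T))]
  rwa [cosh_le_cosh, abs_of_pos h.1, abs_of_nonneg (quarterE_nonneg h.1)] at hE

theorem quarterE_sub_le_inv (h : IsSolution n T) : quarterE n T - T ≤ T⁻¹ := by
  have hT := h.1
  have htangent := cosh_add_sinh_mul_sub_le_cosh T (quarterE n T)
  have hinv : (cosh (quarterE n T))⁻¹ ≤ 1 := inv_le_one_of_one_le₀ (one_le_cosh _)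
  have hsinh : T * (quarterE n T - T) ≤ sinh T * (quarterE n T - T) :=
    mul_le_mul_of_nonneg_right (self_le_sinh_iff.2 hT.le) (sub_nonneg.2 h.le_quarterE)
  rw [← one_div, le_div_iff₀ hT]
  linarith [h.cosh_eq]

theorem quarterE_le_add_log_four (h : IsSolution n T) (hn : 1 ≤ n) :
    quarterE n T ≤ T + log 4 := by
  set E := quarterE n T
  have harsinh : 0 ≤ arsinh 1 := arsinh_nonneg_iff.2 zero_le_one
  have hc : arsinh 1 ≤ E := by
    have hn' : (1 : ℝ) ≤ n := by exact_mod_cast hn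
    nlinarith [natCast_mul_arsinh_one_le_quarterE (n := n) h.1]
  have hcosh : √2 ≤ cosh E := by
    rwa [← cosh_arsinh_one, cosh_le_cosh, abs_of_nonneg harsinh,
      abs_of_nonneg (quarterE_nonneg h.1)]
  have hinv : (cosh E)⁻¹ ≤ cosh E / 2 := by
    rw [inv_le_iff_one_le_mul₀ (cosh_pos E)]
    nlinarith [sq_sqrt (zero_le_two (α := ℝ)), sqrt_nonneg 2]
  have hexp : exp E ≤ exp (T + log 4) := by
    rw [exp_add, exp_log four_pos]
    linarith [h.cosh_eq, cosh_add_sinh E, cosh_add_sinh T, sinh_lt_cosh E, sinh_pos_iff.2 h.1]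
  exact exp_le_exp.1 hexp

theorem natCast_mul_arsinh_one_sub_log_four_le (h : IsSolution n T) (hn : 1 ≤ n) :
    n * arsinh 1 - log 4 ≤ T := by
  linarith [natCast_mul_arsinh_one_le_quarterE (n := n) h.1, h.quarterE_le_add_log_four hn]

theorem neg_inv_le_sub_natCast_mul_arsinh_one (h : IsSolution n T) :
    -T⁻¹ ≤ T - n * arsinh 1 := by
  linarith [natCast_mul_arsinh_one_le_quarterE (n := n) h.1, h.quarterE_sub_le_inv]

theorem sub_natCast_mul_arsinh_one_le (h : IsSolution n T) (hn : 1 ≤ n) (hT : 1 / 2 ≤ T) :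
    T - n * arsinh 1 ≤ 64 * (n * exp (-(2 * arsinh 1)) ^ n) := by
  have hexp : exp (-(2 * T)) ≤ 16 * exp (-(2 * arsinh 1)) ^ n := by
    rw [← exp_nat_mul, show (16 : ℝ) = exp (log 4) * exp (log 4) by
      rw [exp_log four_pos]; norm_num, ← exp_add, ← exp_add, exp_le_exp]
    linarith [h.natCast_mul_arsinh_one_sub_log_four_le hn]
  calc T - n * arsinh 1 ≤ quarterE n T - n * arsinh 1 := by linarith [h.le_quarterE]
    _ ≤ n * (cosh T / sinh T - 1) := quarterE_sub_le h.1
    _ ≤ n * (4 * exp (-(2 * T))) := by gcongr; exact cosh_div_sinh_sub_one_le hT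
    _ ≤ n * (4 * (16 * exp (-(2 * arsinh 1)) ^ n)) := by gcongr
    _ = 64 * (n * exp (-(2 * arsinh 1)) ^ n) := by ring

end IsSolution

theorem tn_asymptotic (t : ℕ → ℝ)
    (ht : ∀ n : ℕ, 1 ≤ n → 0 < t n ∧
      Real.cosh (t n) =
        Real.tanh ((4 * n * Real.arsinh (Real.cosh (t n) / Real.sinh (t n))) / 4) *
          Real.sinh ((4 * n * Real.arsinh (Real.cosh (t n) / Real.sinh (t n))) / 4)) :
    Filter.Tendsto (fun n : ℕ => t n - n * Real.log (1 + Real.sqrt 2))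
      Filter.atTop (nhds 0) := by
  have hsol (n : ℕ) (hn : 1 ≤ n) : IsSolution n (t n) := by
    simpa only [IsSolution, quarterE, mul_assoc,
      mul_div_cancel_left₀ _ (four_ne_zero (α := ℝ))] using ht n hn
  have hc : 0 < arsinh 1 := arsinh_pos_iff.2 one_pos
  rw [← arsinh_one]
  have htop : Tendsto t atTop atTop := by
    refine tendsto_atTop_mono' atTop ?_
      (tendsto_atTop_add_const_right _ (-log 4) (tendsto_natCast_atTop_atTop.atTop_mul_const hc))
    filter_upwards [eventually_ge_atTop 1] with n hn
    linarith [(hsol n hn).natCast_mul_arsinh_one_sub_log_four_le hn]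
  have hlower : Tendsto (fun n => -(t n)⁻¹) atTop (𝓝 0) := by
    simpa using (tendsto_inv_atTop_zero.comp htop).neg
  have hupper : Tendsto (fun n : ℕ => 64 * (n * exp (-(2 * arsinh 1)) ^ n)) atTop (𝓝 0) := by
    simpa using (tendsto_self_mul_const_pow_of_lt_one (exp_pos _).le
      (exp_lt_one_iff.2 (by linarith))).const_mul 64
  refine tendsto_of_tendsto_of_tendsto_of_le_of_le' hlower hupper ?_ ?_
  · filter_upwards [eventually_ge_atTop 1] with n hn
    exact (hsol n hn).neg_inv_le_sub_natCast_mul_arsinh_one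
  · filter_upwards [eventually_ge_atTop 1, htop.eventually_ge_atTop (1 / 2)] with n hn hT
    exact (hsol n hn).sub_natCast_mul_arsinh_one_le hn hT
end
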